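/- Let G be a group of exponent dividing 4, metabelian, and nilpotent of class at most 4. Define x ∘ y = x·y·(y,x)² where (a,b) = a⁻¹b⁻¹ab. Then ∘ is an associative operation on G; explicitly, (x ∘ y) ∘ z = x·y·z·(y,x)²(z,y)²(z,x)² = x ∘ (y ∘ z) for all x, y, z ∈ G. -/

import Mathlib

/-!
Write `(a,b)` for `paperComm a b` and `γ₂` for `(⊤ : Subgroup G).lowerCentralSeries 1`.
For `u ∈ γ₂` put `k = (u,v)` and `l = (k,v)`: then `k` commutes with `u` (metabelian) and `l` is
central (class `≤ 4`), so expanding `1 = (vu)⁴` gives `1 = v⁴u⁴k⁶l⁴ = k²`. Consequently squares of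
elements of `γ₂` are central, and `(a,b)²` is multiplicative in each argument. Expanding
`(x∘y)∘z = xy(y,x)² z (z, xy(y,x)²)²` and `x∘(y∘z) = x yz(z,y)² (yz(z,y)², x)²` with these rules
gives the common value `xyz(y,x)²(z,y)²(z,x)²` on both sides.
-/

/-- The commutator `(a,b) = a⁻¹ * b⁻¹ * a * b` used in the paper. -/
def paperComm {G : Type*} [Group G] (a b : G) : G := a⁻¹ * b⁻¹ * a * b

/-- The verbal operation `x ∘ y = x * y * (y,x)²`. -/
def starOp {G : Type*} [Group G] (x y : G) : G := x * y * (paperComm y x) ^ 2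

open scoped commutatorElement

open Subgroup

section

variable {G : Type*} [Group G]

theorem paperComm_eq_commutatorElement (a b : G) : paperComm a b = ⁅a⁻¹, b⁻¹⁆ := by
  simp [paperComm, commutatorElement_def]

theorem paperComm_eq_one_iff {a b : G} : paperComm a b = 1 ↔ Commute a b := by
  rw [paperComm_eq_commutatorElement, commutatorElement_eq_one_iff_commute, Commute.inv_inv_iff]

theorem mul_eq_mul_mul_paperComm (a b : G) : a * b = b * (a * paperComm a b) := by
  unfold paperComm; group

theorem inv_mul_mul_eq_mul_paperComm (a b : G) : b⁻¹ * a * b = a * paperComm a b := by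
  unfold paperComm; group

theorem paperComm_mul_right (z a b : G) :
    paperComm z (a * b) = paperComm z b * (b⁻¹ * paperComm z a * b) := by
  unfold paperComm; group

theorem paperComm_mul_left (a b x : G) :
    paperComm (a * b) x = b⁻¹ * paperComm a x * b * paperComm b x := by
  unfold paperComm; group

theorem paperComm_mem_lowerCentralSeries_succ {n : ℕ} {u : G}
    (hu : u ∈ (⊤ : Subgroup G).lowerCentralSeries n) (v : G) :
    paperComm u v ∈ (⊤ : Subgroup G).lowerCentralSeries (n + 1) := by
  rw [paperComm_eq_commutatorElement, Subgroup.lowerCentralSeries_succ]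
  exact commutator_mem_commutator (inv_mem hu) (mem_top _)

theorem paperComm_mem_commutator (a b : G) :
    paperComm a b ∈ (⊤ : Subgroup G).lowerCentralSeries 1 :=
  paperComm_mem_lowerCentralSeries_succ (mem_top a) b

theorem mem_center_of_mem_lowerCentralSeries {n : ℕ}
    (hn : (⊤ : Subgroup G).lowerCentralSeries (n + 1) = ⊥) {g : G}
    (hg : g ∈ (⊤ : Subgroup G).lowerCentralSeries n) : g ∈ center G := by
  refine mem_center_iff.mpr fun h => (commutatorElement_eq_one_iff_commute.mp ?_).eq.symm
  rw [← mem_bot, ← hn]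
  exact commutator_mem_commutator hg (mem_top h)

theorem pow_four_of_conj_relations {u v k l : G} (huv : u * v = v * (u * k))
    (hkv : k * v = v * (k * l)) (hku : Commute k u) (hl : l ∈ center G) :
    (v * u) ^ 4 = v ^ 4 * u ^ 4 * k ^ 6 * l ^ 4 := by
  have tail : ∀ {p q r : G}, p * q = q * r → ∀ w, p * (q * w) = q * (r * w) :=
    fun h w => by rw [← mul_assoc, h, mul_assoc]
  have hlv : l * v = v * l := (mem_center_iff.mp hl v).symm
  have hlu : l * u = u * l := (mem_center_iff.mp hl u).symm
  have hlk : l * k = k * l := (mem_center_iff.mp hl k).symm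
  -- rewriting moves every `v`, then every `u`, to the front of the word, collecting `k`s and `l`s
  simp only [pow_succ, pow_zero, one_mul, mul_assoc, tail huv, tail hkv, tail hlv, tail hku.eq,
    tail hlu, tail hlk, hku.eq, hlu]

section Theta

variable (hexp : ∀ x : G, x ^ 4 = 1)
  (hmet : ∀ a ∈ (⊤ : Subgroup G).lowerCentralSeries 1,
    ∀ b ∈ (⊤ : Subgroup G).lowerCentralSeries 1, a * b = b * a)
  (hnil : (⊤ : Subgroup G).lowerCentralSeries 4 = ⊥)
include hexp hmet hnil

theorem paperComm_sq_eq_one_of_mem_commutator {u : G}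
    (hu : u ∈ (⊤ : Subgroup G).lowerCentralSeries 1) (v : G) : paperComm u v ^ 2 = 1 := by
  set k := paperComm u v
  have hk : k ∈ (⊤ : Subgroup G).lowerCentralSeries 2 := paperComm_mem_lowerCentralSeries_succ hu v
  have hl : paperComm k v ∈ center G := mem_center_of_mem_lowerCentralSeries hnil
    (paperComm_mem_lowerCentralSeries_succ hk v)
  have h := pow_four_of_conj_relations (mul_eq_mul_mul_paperComm u v)
    (mul_eq_mul_mul_paperComm k v) (hmet _ (paperComm_mem_commutator u v) _ hu) hl
  rw [show 6 = 4 + 2 from rfl, pow_add] at h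
  simpa only [hexp, one_mul, mul_one] using h.symm

theorem sq_mem_center_of_mem_commutator {c : G}
    (hc : c ∈ (⊤ : Subgroup G).lowerCentralSeries 1) : c ^ 2 ∈ center G := by
  refine mem_center_iff.mpr fun g => ?_
  set k := paperComm c g
  have hkc : Commute k c := hmet _ (paperComm_mem_commutator c g) _ hc
  have hk2 : k ^ 2 = 1 := paperComm_sq_eq_one_of_mem_commutator hexp hmet hnil hc g
  have hck : c * g = g * (c * k) := mul_eq_mul_mul_paperComm c g
  symm
  calc c ^ 2 * g = g * (c * k) ^ 2 := by
        rw [pow_two, pow_two, mul_assoc, hck, ← mul_assoc, hck, mul_assoc]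
    _ = g * c ^ 2 := by rw [hkc.symm.mul_pow, hk2, mul_one]

theorem paperComm_mul_right_sq (z a b : G) :
    paperComm z (a * b) ^ 2 = paperComm z b ^ 2 * paperComm z a ^ 2 := by
  have hza := paperComm_mem_commutator z a
  have hzb := paperComm_mem_commutator z b
  have hzab := paperComm_mem_commutator (paperComm z a) b
  rw [paperComm_mul_right, inv_mul_mul_eq_mul_paperComm, ← mul_assoc,
    Commute.mul_pow (Commute.mul_left (hmet _ hzb _ hzab) (hmet _ hza _ hzab)),
    Commute.mul_pow (hmet _ hzb _ hza),
    paperComm_sq_eq_one_of_mem_commutator hexp hmet hnil hza, mul_one]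

theorem paperComm_mul_left_sq (a b x : G) :
    paperComm (a * b) x ^ 2 = paperComm a x ^ 2 * paperComm b x ^ 2 := by
  have hax := paperComm_mem_commutator a x
  have hbx := paperComm_mem_commutator b x
  have haxb := paperComm_mem_commutator (paperComm a x) b
  rw [paperComm_mul_left, inv_mul_mul_eq_mul_paperComm,
    Commute.mul_pow (Commute.mul_left (hmet _ hax _ hbx) (hmet _ haxb _ hbx)),
    Commute.mul_pow (hmet _ hax _ haxb),
    paperComm_sq_eq_one_of_mem_commutator hexp hmet hnil hax, mul_one]

end Theta

end

/-- In the variety Θ, the operation `x ∘ y = xy(y,x)²` is associative, with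
explicit common value `xyz(y,x)²(z,y)²(z,x)²`. -/
theorem starOp_assoc {G : Type*} [Group G]
    (hexp : ∀ x : G, x ^ 4 = 1)
    (hmet : ∀ a ∈ (⊤ : Subgroup G).lowerCentralSeries 1, ∀ b ∈ (⊤ : Subgroup G).lowerCentralSeries 1, a * b = b * a)
    (hnil : (⊤ : Subgroup G).lowerCentralSeries 4 = ⊥) (x y z : G) :
    starOp (starOp x y) z =
      x * y * z * (paperComm y x) ^ 2 * (paperComm z y) ^ 2 * (paperComm z x) ^ 2 ∧
    starOp x (starOp y z) =
      x * y * z * (paperComm y x) ^ 2 * (paperComm z y) ^ 2 * (paperComm z x) ^ 2 := by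
  have central : ∀ a b g : G, Commute g (paperComm a b ^ 2) := fun a b => mem_center_iff.mp <|
    sq_mem_center_of_mem_commutator hexp hmet hnil (paperComm_mem_commutator a b)
  have sq := paperComm_mul_left_sq hexp hmet hnil
  have sq' := paperComm_mul_right_sq hexp hmet hnil
  constructor
  · rw [starOp, starOp, sq', paperComm_eq_one_iff.mpr (central y x z), one_pow, one_mul, sq']
    simp only [mul_assoc, (central y x z).symm.left_comm]
  · rw [starOp, starOp, sq, paperComm_eq_one_iff.mpr (central z y x).symm, one_pow, mul_one, sq]
    simp only [mul_assoc, (central y x (paperComm z y ^ 2)).left_comm]
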